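/- For fixed ℓ ∈ ℕ and τ ∈ (-1,1), the constant D_{N,ℓ}(τ) := (K_{N+ℓ}(τ)/K_N(τ)) · ((N+ℓ)/N)^{N/2 + (N+ℓ)(N+ℓ-1)/4} satisfies D_{N,ℓ}(τ) = (1+O(1/N)) N^{-ℓ/2} e^{-Nℓ/2} (4π(1+τ))^{ℓ/2} as N → ∞. -/

import Mathlib

open Real Filter Finset Nat

set_option maxHeartbeats 1000000

/-- The normalization constant
`K_N(τ) = N^{-N(N+1)/4} (1+τ)^{N/2} 2^{N(N+1)/4} ∏_{i=1}^N Γ(i/2)`. -/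
noncomputable def Knorm (N : ℕ) (τ : ℝ) : ℝ :=
  (N : ℝ) ^ (-((N : ℝ) * ((N : ℝ) + 1)) / 4) * (1 + τ) ^ ((N : ℝ) / 2) *
    (2 : ℝ) ^ (((N : ℝ) * ((N : ℝ) + 1)) / 4) * ∏ i ∈ Finset.Icc 1 N, Real.Gamma ((i : ℝ) / 2)

/-- `D_{N,ℓ}(τ) = (K_{N+ℓ}(τ)/K_N(τ)) ((N+ℓ)/N)^{N/2+(N+ℓ)(N+ℓ-1)/4}`. -/
noncomputable def Dconst (N ℓ : ℕ) (τ : ℝ) : ℝ :=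
  Knorm (N + ℓ) τ / Knorm N τ *
    (((N : ℝ) + ℓ) / N) ^ ((N : ℝ) / 2 + ((N : ℝ) + ℓ) * ((N : ℝ) + ℓ - 1) / 4)

/- Elementary log bounds -/
lemma log_one_add_le {x : ℝ} (hx : 0 ≤ x) : Real.log (1 + x) ≤ x := by
  have h := Real.log_le_sub_one_of_pos (show (0:ℝ) < 1 + x by linarith)
  linarith

lemma le_log_one_add {x : ℝ} (hx : 0 ≤ x) : x - x ^ 2 ≤ Real.log (1 + x) := by
  have h1 : (0:ℝ) < 1 + x := by linarith
  have h := Real.log_le_sub_one_of_pos (show (0:ℝ) < (1+x)⁻¹ by positivity)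
  rw [Real.log_inv] at h
  have h2 : (1+x)⁻¹ - 1 = -(x / (1+x)) := by field_simp; ring
  rw [h2] at h
  have h3 : x / (1+x) ≤ Real.log (1+x) := by linarith
  have h4 : x - x ^ 2 ≤ x / (1+x) := by
    rw [le_div_iff₀ h1]; nlinarith
  linarith

lemma tendsto_log_stirlingSeq :
    Tendsto (fun n => Real.log (Stirling.stirlingSeq (n + 1))) atTop
      (nhds (Real.log (Real.sqrt Real.pi))) := by
  have h : Tendsto (fun n => Stirling.stirlingSeq (n + 1)) atTop (nhds (Real.sqrt Real.pi)) :=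
    Stirling.tendsto_stirlingSeq_sqrt_pi.comp (tendsto_add_atTop_nat 1)
  exact ((Real.continuousAt_log (by positivity)).tendsto.comp h)

lemma log_stirlingSeq_ge (k : ℕ) :
    Real.log (Real.sqrt Real.pi) ≤ Real.log (Stirling.stirlingSeq (k + 1)) := by
  refine le_of_tendsto tendsto_log_stirlingSeq ?_
  refine eventually_atTop.2 ⟨k, fun m hm => ?_⟩
  exact Stirling.log_stirlingSeq'_antitone hm

lemma log_stirlingSeq_telescope (k : ℕ) (hk : 1 ≤ k) (m : ℕ) :
    Real.log (Stirling.stirlingSeq (k + 1)) - Real.log (Stirling.stirlingSeq (k + m + 1)) ≤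
      1 / 4 * (1 / (k : ℝ) - 1 / ((k : ℝ) + m)) := by
  induction m with
  | zero => simp
  | succ m ih =>
      have hk0 : (0:ℝ) < k := by exact_mod_cast hk
      have hkm : (0:ℝ) < (k:ℝ) + m := by positivity
      have hkm1 : (0:ℝ) < (k:ℝ) + m + 1 := by linarith
      have hcast : ((k + m + 1 : ℕ) : ℝ) = (k:ℝ) + m + 1 := by push_cast; ring
      have h1' : Real.log (Stirling.stirlingSeq (k + m + 1)) -
          Real.log (Stirling.stirlingSeq (k + m + 2)) ≤ 1 / (4 * ((k:ℝ) + m + 1) ^ 2) := by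
        have := Stirling.log_stirlingSeq_sub_log_stirlingSeq_succ (k + m + 1)
        rwa [hcast] at this
      have h2 : 1 / (4 * ((k:ℝ) + m + 1) ^ 2) ≤
          1 / 4 * (1 / ((k:ℝ) + m) - 1 / ((k:ℝ) + m + 1)) := by
        have he : 1 / 4 * (1 / ((k:ℝ)+m) - 1 / ((k:ℝ)+m+1)) =
            1 / (4 * (((k:ℝ)+m) * ((k:ℝ)+m+1))) := by
          field_simp
          ring
        rw [he]
        apply one_div_le_one_div_of_le (by positivity)
        nlinarith
      have hgoal : k + (m + 1) + 1 = k + m + 2 := by omega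
      rw [hgoal]
      have hc2 : ((m + 1 : ℕ) : ℝ) = (m:ℝ) + 1 := by push_cast; ring
      have he2 : 1 / ((k:ℝ) + ((m:ℝ)+1)) = 1 / ((k:ℝ) + m + 1) := by ring_nf
      push_cast
      have : (k:ℝ) + ((m:ℝ) + 1) = (k:ℝ) + m + 1 := by ring
      rw [this]
      linarith

lemma log_stirlingSeq_le (k : ℕ) (hk : 1 ≤ k) :
    Real.log (Stirling.stirlingSeq (k + 1)) ≤ Real.log (Real.sqrt Real.pi) + 1 / (4 * k) := by
  have hk0 : (0:ℝ) < k := by exact_mod_cast hk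
  have hlim : Tendsto (fun m : ℕ => Real.log (Stirling.stirlingSeq (m + k + 1))) atTop
      (nhds (Real.log (Real.sqrt Real.pi))) :=
    tendsto_log_stirlingSeq.comp (tendsto_add_atTop_nat k)
  have hlow : ∀ m : ℕ, Real.log (Stirling.stirlingSeq (k + 1)) - 1 / (4 * k) ≤
      Real.log (Stirling.stirlingSeq (m + k + 1)) := by
    intro m
    have h := log_stirlingSeq_telescope k hk m
    rw [Nat.add_comm k m] at h
    have hkm : (0:ℝ) < (k:ℝ) + m := by positivity
    have h0 : (0:ℝ) ≤ 1 / ((k:ℝ) + m) := by positivity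
    have he : 1 / (4 * (k:ℝ)) = 1 / 4 * (1 / (k:ℝ)) := by ring
    linarith
  have := ge_of_tendsto hlim (eventually_atTop.2 ⟨0, fun m _ => hlow m⟩)
  linarith

lemma log_factorial_bound (n : ℕ) (hn : 2 ≤ n) :
    |Real.log (n !) - ((n : ℝ) * Real.log n - n + 1 / 2 * Real.log (2 * n) +
      Real.log (Real.sqrt Real.pi))| ≤ 1 / (2 * n) := by
  obtain ⟨k, rfl⟩ : ∃ k, n = k + 1 := ⟨n - 1, by omega⟩
  have hk : 1 ≤ k := by omega
  have hk0 : (0:ℝ) < k := by exact_mod_cast hk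
  have hf := Stirling.log_stirlingSeq_formula (k + 1)
  have hcast : ((k + 1 : ℕ) : ℝ) = (k:ℝ) + 1 := by push_cast; ring
  have hne : ((k + 1 : ℕ) : ℝ) ≠ 0 := by rw [hcast]; positivity
  have hfe : Real.log (((k + 1 : ℕ) : ℝ) / Real.exp 1) =
      Real.log ((k + 1 : ℕ) : ℝ) - 1 := by
    rw [Real.log_div hne (Real.exp_ne_zero 1), Real.log_exp]
  rw [hfe] at hf
  have h1 := log_stirlingSeq_ge k
  have h2 := log_stirlingSeq_le k hk
  have hk1 : (1:ℝ) ≤ (k:ℝ) := by exact_mod_cast hk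
  have hbd : 1 / (4 * (k:ℝ)) ≤ 1 / (2 * ((k:ℝ) + 1)) := by
    rw [div_le_div_iff₀ (by positivity) (by positivity)]
    nlinarith
  rw [abs_le]
  rw [hcast] at hf ⊢
  constructor <;> linarith

lemma gamma_half_bound (k : ℕ) (hk : 4 ≤ k) :
    |Real.log (Real.Gamma ((k : ℝ) / 2)) -
        (((k : ℝ) - 1) / 2 * Real.log ((k : ℝ) / 2) - (k : ℝ) / 2 +
          1 / 2 * Real.log (2 * Real.pi))| ≤ 4 / (k : ℝ) := by
  have hlogpi : Real.log (Real.sqrt Real.pi) = 1 / 2 * Real.log Real.pi := by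
    rw [Real.log_sqrt Real.pi_pos.le]; ring
  have hlog2pi : Real.log (2 * Real.pi) = Real.log 2 + Real.log Real.pi :=
    Real.log_mul two_ne_zero Real.pi_ne_zero
  rcases Nat.even_or_odd k with he | ho
  · -- even case
    obtain ⟨r, hr⟩ := he
    obtain ⟨p, rfl⟩ : ∃ p, r = p + 1 := ⟨r - 1, by omega⟩
    subst hr
    have hp : 1 ≤ p := by omega
    have hp1 : (0:ℝ) < (p:ℝ) + 1 := by positivity
    have hfacne : ((p ! : ℕ) : ℝ) ≠ 0 := by
      exact_mod_cast (Nat.factorial_pos p).ne'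
    have hfac : Real.log (((p+1)! : ℕ) : ℝ) = Real.log ((p:ℝ) + 1) + Real.log ((p ! : ℕ) : ℝ) := by
      rw [Nat.factorial_succ]
      push_cast
      rw [Real.log_mul (by positivity) hfacne]
    have key : Real.log (Real.Gamma (((p + 1 + (p + 1) : ℕ) : ℝ) / 2)) -
        ((((p + 1 + (p + 1) : ℕ) : ℝ) - 1) / 2 * Real.log (((p + 1 + (p + 1) : ℕ) : ℝ) / 2) -
          ((p + 1 + (p + 1) : ℕ) : ℝ) / 2 + 1 / 2 * Real.log (2 * Real.pi)) =
        Real.log (((p+1)! : ℕ) : ℝ) - (((p:ℝ)+1) * Real.log ((p:ℝ)+1) - ((p:ℝ)+1) +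
          1 / 2 * Real.log (2 * ((p:ℝ)+1)) + Real.log (Real.sqrt Real.pi)) := by
      have hc : (((p + 1 + (p + 1) : ℕ) : ℝ)) / 2 = (p:ℝ) + 1 := by push_cast; ring
      rw [hc, Real.Gamma_nat_eq_factorial p, hfac, hlogpi, hlog2pi,
        Real.log_mul two_ne_zero hp1.ne', show (((p + 1 + (p + 1) : ℕ) : ℝ)) = 2 * ((p:ℝ)+1) from by push_cast; ring]
      ring
    rw [key]
    have hb := log_factorial_bound (p+1) (by omega)
    push_cast at hb ⊢
    refine hb.trans ?_
    rw [div_le_div_iff₀ (by positivity) (by positivity)]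
    nlinarith
  · -- odd case
    obtain ⟨m, rfl⟩ := ho
    obtain ⟨q, rfl⟩ : ∃ q, m = q + 2 := ⟨m - 2, by omega⟩
    set M : ℝ := (q:ℝ) + 2 with hM
    have hM0 : (0:ℝ) < M := by positivity
    have hM1 : (1:ℝ) ≤ M := by
      have : (0:ℝ) ≤ (q:ℝ) := Nat.cast_nonneg q
      rw [hM]; linarith
    have hΓM : Real.Gamma M = (((q+1)! : ℕ) : ℝ) := by
      rw [show M = ((q+1 : ℕ) : ℝ) + 1 from by push_cast [hM]; ring]
      exact Real.Gamma_nat_eq_factorial (q+1)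
    have hΓ2M : Real.Gamma (2 * M) = (((2*q+3)! : ℕ) : ℝ) := by
      rw [show 2 * M = ((2*q+3 : ℕ) : ℝ) + 1 from by push_cast [hM]; ring]
      exact Real.Gamma_nat_eq_factorial (2*q+3)
    have hdup := Real.Gamma_mul_Gamma_add_half M
    have hΓMpos : 0 < Real.Gamma M := Real.Gamma_pos_of_pos hM0
    have hΓhpos : 0 < Real.Gamma (M + 1/2) := Real.Gamma_pos_of_pos (by positivity)
    have hfac1 : ((( 2*q+3)! : ℕ) : ℝ) ≠ 0 := by exact_mod_cast (Nat.factorial_pos _).ne'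
    have hfac2 : (((q+1)! : ℕ) : ℝ) ≠ 0 := by exact_mod_cast (Nat.factorial_pos _).ne'
    have hsqpi : (0:ℝ) < Real.sqrt Real.pi := Real.sqrt_pos.mpr Real.pi_pos
    -- log of duplication formula
    have hlogdup : Real.log (Real.Gamma (M + 1/2)) =
        Real.log ((((2*q+3)! : ℕ) : ℝ)) + (1 - 2*M) * Real.log 2 + Real.log (Real.sqrt Real.pi)
          - Real.log ((((q+1)! : ℕ) : ℝ)) := by
      have h2 : Real.Gamma (M + 1/2) = Real.Gamma (2*M) * (2:ℝ) ^ (1 - 2*M) * Real.sqrt Real.pi / Real.Gamma M := by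
        field_simp at hdup ⊢
        linarith [hdup]
      rw [h2, Real.log_div (by positivity) hΓMpos.ne', Real.log_mul (by positivity) hsqpi.ne',
        Real.log_mul (by positivity) (by positivity), Real.log_rpow two_pos, hΓ2M, hΓM]
    -- factorial shifts
    have hshift1 : Real.log ((((2*q+4)! : ℕ) : ℝ)) =
        Real.log (2*M) + Real.log ((((2*q+3)! : ℕ) : ℝ)) := by
      rw [show (2*q+4) = (2*q+3)+1 from by ring, Nat.factorial_succ]
      push_cast [hM]
      rw [Real.log_mul (by positivity) hfac1]
      ring_nf
    have hshift2 : Real.log ((((q+2)! : ℕ) : ℝ)) =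
        Real.log M + Real.log ((((q+1)! : ℕ) : ℝ)) := by
      rw [show (q+2) = (q+1)+1 from by ring, Nat.factorial_succ]
      push_cast [hM]
      rw [Real.log_mul (by positivity) hfac2]
      ring_nf
    have hb1 := log_factorial_bound (2*q+4) (by omega)
    have hb2 := log_factorial_bound (q+2) (by omega)
    have hc1 : ((2*q+4 : ℕ) : ℝ) = 2*M := by push_cast [hM]; ring
    have hc2 : ((q+2 : ℕ) : ℝ) = M := by push_cast [hM]; ring
    rw [hc1] at hb1
    rw [hc2] at hb2
    -- bound for W := M * log (1 + 1/(2M))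
    have hx0 : (0:ℝ) ≤ 1/(2*M) := by positivity
    have hW1 : Real.log (1 + 1/(2*M)) ≤ 1/(2*M) := log_one_add_le hx0
    have hW2 : 1/(2*M) - (1/(2*M))^2 ≤ Real.log (1 + 1/(2*M)) := le_log_one_add hx0
    have hsq : (1/(2*M))^2 ≤ 1/(4*M) := by
      rw [div_pow, div_le_div_iff₀ (by positivity) (by positivity)]
      nlinarith
    -- split log (M + 1/2)
    have hsplit : Real.log (M + 1/2) = Real.log M + Real.log (1 + 1/(2*M)) := by
      rw [show M + 1/2 = M * (1 + 1/(2*M)) from by field_simp, ← Real.log_mul hM0.ne' (by positivity)]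
    -- main identity
    have hkc : ((2*(q+2)+1 : ℕ) : ℝ) = 2*M + 1 := by push_cast [hM]; ring
    have hargc : ((2*(q+2)+1 : ℕ) : ℝ) / 2 = M + 1/2 := by rw [hkc]; ring
    have hlog2M : Real.log (2*M) = Real.log 2 + Real.log M := Real.log_mul two_ne_zero hM0.ne'
    have hlog22M : Real.log (2*(2*M)) = Real.log 2 + (Real.log 2 + Real.log M) := by
      rw [Real.log_mul two_ne_zero (by positivity), hlog2M]
    have key : Real.log (Real.Gamma (((2*(q+2)+1 : ℕ) : ℝ) / 2)) -
        ((((2*(q+2)+1 : ℕ) : ℝ) - 1) / 2 * Real.log (((2*(q+2)+1 : ℕ) : ℝ) / 2) -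
          ((2*(q+2)+1 : ℕ) : ℝ) / 2 + 1 / 2 * Real.log (2 * Real.pi)) =
        (Real.log ((((2*q+4)! : ℕ) : ℝ)) - (2*M * Real.log (2*M) - 2*M + 1/2 * Real.log (2*(2*M)) + Real.log (Real.sqrt Real.pi)))
        - (Real.log ((((q+2)! : ℕ) : ℝ)) - (M * Real.log M - M + 1/2 * Real.log (2*M) + Real.log (Real.sqrt Real.pi)))
        + (1/2 - M * Real.log (1 + 1/(2*M))) := by
      rw [hargc, hkc, hlogdup, hshift1, hshift2, hsplit, hlog22M, hlog2M, hlogpi, hlog2pi]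
      ring
    rw [key, hkc]
    have e1 := abs_le.mp hb1
    have e2 := abs_le.mp hb2
    have hMu : M * (1/(2*M)) = 1/2 := by field_simp
    have hWub : M * Real.log (1 + 1/(2*M)) ≤ 1/2 := by
      have h := mul_le_mul_of_nonneg_left hW1 hM0.le
      linarith
    have hWlb : 1/2 - 1/(4*M) ≤ M * Real.log (1 + 1/(2*M)) := by
      have h := mul_le_mul_of_nonneg_left hW2 hM0.le
      have hexp : M * (1/(2*M) - (1/(2*M))^2) = 1/2 - 1/(4*M) := by
        field_simp
        ring
      linarith
    have hMne : M ≠ 0 := hM0.ne'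
    have h14 : 1/(4*M) = 1/4 * (1/M) := by field_simp
    have h12 : 1/(2*M) = 1/2 * (1/M) := by field_simp
    have h22 : 1/(2*(2*M)) = 1/4 * (1/M) := by
      rw [show 2*(2*M) = 4*M from by ring, h14]
    have h4 : (1:ℝ)/M ≤ 4 / (2*M+1) := by
      rw [div_le_div_iff₀ hM0 (by positivity)]
      nlinarith
    rw [abs_le]
    rw [h22] at e1
    rw [h12] at e2
    rw [h14] at hWlb
    constructor
    · linarith [e1.1, e2.2, hWub]
    · linarith [e1.2, e2.1, hWlb]

lemma gauss_sum_real (n : ℕ) : ∑ j ∈ Finset.range n, ((j:ℝ)) = (n:ℝ)*((n:ℝ)-1)/2 := by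
  induction n with
  | zero => simp
  | succ m ih =>
      rw [Finset.sum_range_succ, ih]
      push_cast
      ring

lemma Knorm_pos {τ : ℝ} (hτ : -1 < τ) (M : ℕ) (hM : 1 ≤ M) : 0 < Knorm M τ := by
  have h1 : (0:ℝ) < 1 + τ := by linarith
  have hM0 : (0:ℝ) < M := by exact_mod_cast hM
  have hprod : 0 < ∏ i ∈ Finset.Icc 1 M, Real.Gamma ((i:ℝ)/2) := by
    apply Finset.prod_pos
    intro i hi
    have h1i : 1 ≤ i := (Finset.mem_Icc.mp hi).1
    have hi0 : (0:ℝ) < (i:ℝ) := by exact_mod_cast h1i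
    exact Real.Gamma_pos_of_pos (by positivity)
  exact mul_pos (mul_pos (mul_pos (Real.rpow_pos_of_pos hM0 _) (Real.rpow_pos_of_pos h1 _))
    (Real.rpow_pos_of_pos two_pos _)) hprod

lemma log_Knorm {τ : ℝ} (hτ : -1 < τ) (M : ℕ) (hM : 1 ≤ M) :
    Real.log (Knorm M τ) = -((M:ℝ) * ((M:ℝ)+1)) / 4 * Real.log M + (M:ℝ)/2 * Real.log (1+τ)
      + (M:ℝ) * ((M:ℝ)+1) / 4 * Real.log 2
      + ∑ i ∈ Finset.Icc 1 M, Real.log (Real.Gamma ((i:ℝ)/2)) := by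
  have h1 : (0:ℝ) < 1 + τ := by linarith
  have hM0 : (0:ℝ) < M := by exact_mod_cast hM
  have hΓ : ∀ i ∈ Finset.Icc 1 M, Real.Gamma ((i:ℝ)/2) ≠ 0 := by
    intro i hi
    have h1i : 1 ≤ i := (Finset.mem_Icc.mp hi).1
    have hi0 : (0:ℝ) < (i:ℝ) := by exact_mod_cast h1i
    exact (Real.Gamma_pos_of_pos (by positivity)).ne'
  have hprodne : (∏ i ∈ Finset.Icc 1 M, Real.Gamma ((i:ℝ)/2)) ≠ 0 :=
    Finset.prod_ne_zero_iff.mpr hΓ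
  unfold Knorm
  rw [Real.log_mul (by
      exact mul_ne_zero (mul_ne_zero (Real.rpow_pos_of_pos hM0 _).ne'
        (Real.rpow_pos_of_pos h1 _).ne') (Real.rpow_pos_of_pos two_pos _).ne') hprodne,
    Real.log_mul (mul_ne_zero (Real.rpow_pos_of_pos hM0 _).ne'
      (Real.rpow_pos_of_pos h1 _).ne') (Real.rpow_pos_of_pos two_pos _).ne',
    Real.log_mul (Real.rpow_pos_of_pos hM0 _).ne' (Real.rpow_pos_of_pos h1 _).ne',
    Real.log_rpow hM0, Real.log_rpow h1, Real.log_rpow two_pos, Real.log_prod hΓ]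

lemma Dconst_pos {τ : ℝ} (hτ : -1 < τ) (N ℓ : ℕ) (hN : 1 ≤ N) : 0 < Dconst N ℓ τ := by
  have hN0 : (0:ℝ) < N := by exact_mod_cast hN
  have hbase : (0:ℝ) < ((N:ℝ)+ℓ)/N := by positivity
  exact mul_pos (div_pos (Knorm_pos hτ (N+ℓ) (by omega)) (Knorm_pos hτ N hN))
    (Real.rpow_pos_of_pos hbase _)

lemma log_Dconst {τ : ℝ} (hτ : -1 < τ) (N ℓ : ℕ) (hN : 1 ≤ N) :
    Real.log (Dconst N ℓ τ) =
      -((ℓ:ℝ)/2) * Real.log ((N:ℝ) + ℓ)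
      - ((N:ℝ)*ℓ/2 + (ℓ:ℝ)*((ℓ:ℝ)-1)/4) * Real.log N
      + (ℓ:ℝ)/2 * Real.log (1+τ)
      + (2*(N:ℝ)*ℓ + (ℓ:ℝ)^2 + ℓ)/4 * Real.log 2
      + ∑ j ∈ Finset.range ℓ, Real.log (Real.Gamma (((N+1+j : ℕ):ℝ)/2)) := by
  have h1 : (0:ℝ) < 1 + τ := by linarith
  have hN0 : (0:ℝ) < N := by exact_mod_cast hN
  have hNl0 : (0:ℝ) < (N:ℝ) + ℓ := by positivity
  have hKN := Knorm_pos hτ N hN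
  have hKNl := Knorm_pos hτ (N+ℓ) (by omega)
  have hbase : (0:ℝ) < ((N:ℝ)+ℓ)/N := by positivity
  unfold Dconst
  rw [Real.log_mul (div_pos hKNl hKN).ne' (Real.rpow_pos_of_pos hbase _).ne',
    Real.log_div hKNl.ne' hKN.ne', Real.log_rpow hbase, Real.log_div hNl0.ne' hN0.ne',
    log_Knorm hτ (N+ℓ) (by omega), log_Knorm hτ N hN]
  have hsplit : ∑ i ∈ Finset.Icc 1 (N+ℓ), Real.log (Real.Gamma ((i:ℝ)/2))
      = ∑ i ∈ Finset.Icc 1 N, Real.log (Real.Gamma ((i:ℝ)/2))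
        + ∑ j ∈ Finset.range ℓ, Real.log (Real.Gamma (((N+1+j : ℕ):ℝ)/2)) := by
    have h0 : ∀ X : ℕ, Finset.Icc 1 X = Finset.Ioc 0 X := fun X => Finset.Icc_add_one_left_eq_Ioc 0 X
    rw [h0, h0, ← Finset.sum_Ioc_consecutive _ (Nat.zero_le N) (Nat.le_add_right N ℓ)]
    congr 1
    rw [← Finset.Icc_add_one_left_eq_Ioc, ← Finset.Ico_add_one_right_eq_Icc, Finset.sum_Ico_eq_sum_range,
      show N+ℓ+1 - (N+1) = ℓ from by omega]
  rw [hsplit]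
  push_cast
  ring

lemma log_Dconst_est (ℓ : ℕ) (τ : ℝ) (hτ : -1 < τ) (N : ℕ) (hN4 : 4 ≤ N) (hNl : ℓ ≤ N) :
    |Real.log (Dconst N ℓ τ) - (-(ℓ:ℝ)/2 * Real.log N - (N:ℝ)*ℓ/2
        + (ℓ:ℝ)/2 * Real.log (4*Real.pi*(1+τ)))|
      ≤ (2*(ℓ:ℝ)^3 + (ℓ:ℝ)^2 + 4*(ℓ:ℝ) + 1) / N := by
  have hN : 1 ≤ N := by omega
  have hN0 : (0:ℝ) < N := by exact_mod_cast hN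
  have h1 : (0:ℝ) < 1 + τ := by linarith
  have hl0 : (0:ℝ) ≤ (ℓ:ℝ) := Nat.cast_nonneg ℓ
  have hlN : (ℓ:ℝ) ≤ (N:ℝ) := by exact_mod_cast hNl
  have hlog4 : Real.log (4*Real.pi*(1+τ)) = 2*Real.log 2 + Real.log Real.pi + Real.log (1+τ) := by
    rw [Real.log_mul (by positivity) h1.ne', Real.log_mul (by norm_num) Real.pi_ne_zero,
      show (4:ℝ) = 2^2 from by norm_num, Real.log_pow]
    push_cast
    ring
  have hGauss : ∑ j ∈ Finset.range ℓ, ((j:ℝ)) = (ℓ:ℝ)*((ℓ:ℝ)-1)/2 := gauss_sum_real ℓ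
  have hlogl : Real.log (1+(ℓ:ℝ)/N) = Real.log ((N:ℝ)+ℓ) - Real.log N := by
    rw [show 1+(ℓ:ℝ)/N = ((N:ℝ)+ℓ)/N from by field_simp, Real.log_div (by positivity) hN0.ne']
  have hGT : ∀ j ∈ Finset.range ℓ,
      (Real.log (Real.Gamma (((N+1+j : ℕ):ℝ)/2)) - ((((N+1+j : ℕ):ℝ)-1)/2 *
          Real.log (((N+1+j : ℕ):ℝ)/2) - ((N+1+j : ℕ):ℝ)/2 + 1/2*Real.log (2*Real.pi)))
        + (((N:ℝ)+(j:ℝ))/2 * Real.log (1+((j:ℝ)+1)/N) - ((j:ℝ)+1)/2)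
      = Real.log (Real.Gamma (((N+1+j : ℕ):ℝ)/2))
        + ((Real.log 2 - Real.log N)/2) * (j:ℝ)
        + ((N:ℝ)/2*(Real.log 2 - Real.log N) + (N:ℝ)/2 - 1/2*Real.log 2
            - 1/2*Real.log Real.pi) := by
    intro j hj
    have hc : ((N+1+j : ℕ):ℝ) = (N:ℝ)+1+(j:ℝ) := by push_cast; ring
    have hpos : (0:ℝ) < (N:ℝ)+1+(j:ℝ) := by positivity
    have h2 : Real.log (((N+1+j : ℕ):ℝ)/2) = Real.log ((N:ℝ)+1+(j:ℝ)) - Real.log 2 := by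
      rw [hc, Real.log_div hpos.ne' two_ne_zero]
    have h3 : Real.log (1+((j:ℝ)+1)/N) = Real.log ((N:ℝ)+1+(j:ℝ)) - Real.log N := by
      rw [show 1+((j:ℝ)+1)/N = ((N:ℝ)+1+(j:ℝ))/N from by field_simp; ring,
        Real.log_div hpos.ne' hN0.ne']
    rw [h2, h3, hc, Real.log_mul two_ne_zero Real.pi_ne_zero]
    ring
  have hkey : Real.log (Dconst N ℓ τ) - (-(ℓ:ℝ)/2 * Real.log N - (N:ℝ)*ℓ/2
        + (ℓ:ℝ)/2 * Real.log (4*Real.pi*(1+τ)))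
      = (∑ j ∈ Finset.range ℓ,
          (Real.log (Real.Gamma (((N+1+j : ℕ):ℝ)/2)) - ((((N+1+j : ℕ):ℝ)-1)/2 *
            Real.log (((N+1+j : ℕ):ℝ)/2) - ((N+1+j : ℕ):ℝ)/2 + 1/2*Real.log (2*Real.pi))))
        + (∑ j ∈ Finset.range ℓ, (((N:ℝ)+(j:ℝ))/2 * Real.log (1+((j:ℝ)+1)/N) - ((j:ℝ)+1)/2))
        - (ℓ:ℝ)/2 * Real.log (1+(ℓ:ℝ)/N) := by
    rw [log_Dconst hτ N ℓ hN, hlog4, hlogl, ← Finset.sum_add_distrib,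
      Finset.sum_congr rfl hGT, Finset.sum_add_distrib, Finset.sum_add_distrib,
      ← Finset.mul_sum, hGauss, Finset.sum_const, Finset.card_range, nsmul_eq_mul]
    ring
  rw [hkey]
  -- per-term bounds
  have hGbound : ∀ j ∈ Finset.range ℓ,
      |Real.log (Real.Gamma (((N+1+j : ℕ):ℝ)/2)) - ((((N+1+j : ℕ):ℝ)-1)/2 *
          Real.log (((N+1+j : ℕ):ℝ)/2) - ((N+1+j : ℕ):ℝ)/2 + 1/2*Real.log (2*Real.pi))|
        ≤ 4/(N:ℝ) := by
    intro j hj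
    refine (gamma_half_bound (N+1+j) (by omega)).trans ?_
    have hle : (N:ℝ) ≤ ((N+1+j : ℕ):ℝ) := by exact_mod_cast Nat.le_add_right N (1+j) |>.trans (by omega)
    have hp : (0:ℝ) < ((N+1+j : ℕ):ℝ) := by positivity
    rw [div_le_div_iff₀ hp hN0]
    nlinarith
  have hTbound : ∀ j ∈ Finset.range ℓ,
      |((N:ℝ)+(j:ℝ))/2 * Real.log (1+((j:ℝ)+1)/N) - ((j:ℝ)+1)/2| ≤ 2*(ℓ:ℝ)^2/N := by
    intro j hj
    have hj1 : (j:ℝ)+1 ≤ (ℓ:ℝ) := by exact_mod_cast Finset.mem_range.mp hj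
    have hj0 : (0:ℝ) ≤ (j:ℝ) := Nat.cast_nonneg j
    have hx0 : (0:ℝ) ≤ ((j:ℝ)+1)/N := by positivity
    have hup := log_one_add_le hx0
    have hlo := le_log_one_add hx0
    have hcoef : (0:ℝ) ≤ ((N:ℝ)+(j:ℝ))/2 := by positivity
    have h1m := mul_le_mul_of_nonneg_left hup hcoef
    have h2m := mul_le_mul_of_nonneg_left hlo hcoef
    have hA : ((N:ℝ)+(j:ℝ))/2 * (((j:ℝ)+1)/N) - ((j:ℝ)+1)/2 = (j:ℝ)*((j:ℝ)+1)/(2*N) := by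
      field_simp
      ring
    have hAB : ((N:ℝ)+(j:ℝ))/2 * ((((j:ℝ)+1)/N) - (((j:ℝ)+1)/N)^2)
        = (j:ℝ)*((j:ℝ)+1)/(2*N) + ((j:ℝ)+1)/2
          - ((N:ℝ)+(j:ℝ))*((j:ℝ)+1)^2/(2*(N:ℝ)^2) := by
      field_simp
      ring
    have hjl : (j:ℝ) ≤ (ℓ:ℝ) := by linarith
    have hjj : (j:ℝ)*((j:ℝ)+1) ≤ (ℓ:ℝ)*(ℓ:ℝ) :=
      mul_le_mul hjl hj1 (by linarith) hl0
    have e1 : (j:ℝ)*((j:ℝ)+1)/(2*N) ≤ 2*(ℓ:ℝ)^2/N := by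
      rw [div_le_div_iff₀ (by positivity) hN0]
      nlinarith [mul_le_mul_of_nonneg_right hjj hN0.le,
        mul_nonneg (mul_nonneg hl0 hl0) hN0.le]
    have e0 : (0:ℝ) ≤ (j:ℝ)*((j:ℝ)+1)/(2*N) := by positivity
    have e2 : ((N:ℝ)+(j:ℝ))*((j:ℝ)+1)^2/(2*(N:ℝ)^2) ≤ 2*(ℓ:ℝ)^2/N := by
      rw [div_le_div_iff₀ (by positivity) hN0]
      have hsq : ((j:ℝ)+1)^2 ≤ (ℓ:ℝ)^2 := by nlinarith
      have hNj : (N:ℝ)+(j:ℝ) ≤ 2*(N:ℝ) := by linarith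
      have hmain : ((N:ℝ)+(j:ℝ))*((j:ℝ)+1)^2 ≤ (2*(N:ℝ))*((ℓ:ℝ)^2) :=
        mul_le_mul hNj hsq (by positivity) (by linarith)
      nlinarith [mul_le_mul_of_nonneg_right hmain hN0.le,
        mul_nonneg (mul_nonneg hl0 hl0) (mul_nonneg hN0.le hN0.le)]
    rw [abs_le]
    constructor
    · nlinarith [h2m, hAB, e2]
    · nlinarith [h1m, hA, e1]
  have hGsum : |∑ j ∈ Finset.range ℓ,
      (Real.log (Real.Gamma (((N+1+j : ℕ):ℝ)/2)) - ((((N+1+j : ℕ):ℝ)-1)/2 *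
          Real.log (((N+1+j : ℕ):ℝ)/2) - ((N+1+j : ℕ):ℝ)/2 + 1/2*Real.log (2*Real.pi)))|
        ≤ (ℓ:ℝ) * (4/N) := by
    refine (Finset.abs_sum_le_sum_abs _ _).trans ?_
    refine (Finset.sum_le_sum hGbound).trans ?_
    rw [Finset.sum_const, Finset.card_range, nsmul_eq_mul]
  have hTsum : |∑ j ∈ Finset.range ℓ, (((N:ℝ)+(j:ℝ))/2 * Real.log (1+((j:ℝ)+1)/N) - ((j:ℝ)+1)/2)|
        ≤ (ℓ:ℝ) * (2*(ℓ:ℝ)^2/N) := by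
    refine (Finset.abs_sum_le_sum_abs _ _).trans ?_
    refine (Finset.sum_le_sum hTbound).trans ?_
    rw [Finset.sum_const, Finset.card_range, nsmul_eq_mul]
  have hll : 0 ≤ Real.log (1+(ℓ:ℝ)/N) := Real.log_nonneg (by
    have : (0:ℝ) ≤ (ℓ:ℝ)/N := by positivity
    linarith)
  have hlu : Real.log (1+(ℓ:ℝ)/N) ≤ (ℓ:ℝ)/N := log_one_add_le (by positivity)
  have hcl : 0 ≤ (ℓ:ℝ)/2 * Real.log (1+(ℓ:ℝ)/N) := by positivity
  have hcu : (ℓ:ℝ)/2 * Real.log (1+(ℓ:ℝ)/N) ≤ (ℓ:ℝ)/2 * ((ℓ:ℝ)/N) :=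
    mul_le_mul_of_nonneg_left hlu (by positivity)
  have hG2 := abs_le.mp hGsum
  have hT2 := abs_le.mp hTsum
  have hcmp : (ℓ:ℝ) * (4/N) + (ℓ:ℝ) * (2*(ℓ:ℝ)^2/N) + (ℓ:ℝ)/2 * ((ℓ:ℝ)/N)
      ≤ (2*(ℓ:ℝ)^3 + (ℓ:ℝ)^2 + 4*(ℓ:ℝ) + 1) / N := by
    rw [show (ℓ:ℝ) * (4/N) + (ℓ:ℝ) * (2*(ℓ:ℝ)^2/N) + (ℓ:ℝ)/2 * ((ℓ:ℝ)/N)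
        = (2*(ℓ:ℝ)^3 + (ℓ:ℝ)^2/2 + 4*(ℓ:ℝ)) / N from by ring]
    rw [div_le_div_iff₀ hN0 hN0]
    nlinarith [sq_nonneg ((ℓ:ℝ))]
  rw [abs_le]
  constructor
  · linarith [hG2.1, hT2.1, hcu]
  · linarith [hG2.2, hT2.2, hcl]

/-- `D_{N,ℓ}(τ) = (1+O(1/N)) N^{-ℓ/2} e^{-Nℓ/2} (4π(1+τ))^{ℓ/2}` as `N → ∞`. -/
theorem Dconst_asymptotic (ℓ : ℕ) (τ : ℝ) (hτ₁ : -1 < τ) (hτ₂ : τ < 1) :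
    ∃ C > (0 : ℝ), ∃ N₀ : ℕ, ∀ N ≥ N₀,
      |Dconst N ℓ τ -
          (N : ℝ) ^ (-(ℓ : ℝ) / 2) * Real.exp (-((N : ℝ) * ℓ) / 2) *
            (4 * Real.pi * (1 + τ)) ^ ((ℓ : ℝ) / 2)| ≤
        (C / N) * ((N : ℝ) ^ (-(ℓ : ℝ) / 2) * Real.exp (-((N : ℝ) * ℓ) / 2) *
          (4 * Real.pi * (1 + τ)) ^ ((ℓ : ℝ) / 2)) := by
  have h1 : (0:ℝ) < 1 + τ := by linarith
  set c₁ : ℝ := 2*(ℓ:ℝ)^3 + (ℓ:ℝ)^2 + 4*(ℓ:ℝ) + 1 with hc₁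
  have hc₁pos : 0 < c₁ := by positivity
  refine ⟨2*c₁, by positivity, max (max 4 ℓ) (Nat.ceil c₁), ?_⟩
  intro N hN
  obtain ⟨h45, hceil⟩ := max_le_iff.mp hN
  obtain ⟨hN4, hNl⟩ := max_le_iff.mp h45
  have hcN : c₁ ≤ (N:ℝ) := by
    have := Nat.ceil_le.mp hceil
    exact_mod_cast this
  have hN1 : 1 ≤ N := by omega
  have hN0 : (0:ℝ) < N := by exact_mod_cast hN1
  have h4pi : (0:ℝ) < 4*Real.pi*(1+τ) := by positivity
  set A : ℝ := (N : ℝ) ^ (-(ℓ : ℝ) / 2) * Real.exp (-((N : ℝ) * ℓ) / 2) *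
      (4 * Real.pi * (1 + τ)) ^ ((ℓ : ℝ) / 2) with hAdef
  have hApos : 0 < A := by
    rw [hAdef]
    exact mul_pos (mul_pos (Real.rpow_pos_of_pos hN0 _) (Real.exp_pos _))
      (Real.rpow_pos_of_pos h4pi _)
  have hDpos := Dconst_pos hτ₁ N ℓ hN1
  have hlogA : Real.log A = -(ℓ:ℝ)/2 * Real.log N - (N:ℝ)*ℓ/2
      + (ℓ:ℝ)/2 * Real.log (4*Real.pi*(1+τ)) := by
    rw [hAdef, Real.log_mul (mul_pos (Real.rpow_pos_of_pos hN0 _) (Real.exp_pos _)).ne'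
        (Real.rpow_pos_of_pos h4pi _).ne',
      Real.log_mul (Real.rpow_pos_of_pos hN0 _).ne' (Real.exp_pos _).ne',
      Real.log_rpow hN0, Real.log_exp, Real.log_rpow h4pi]
    ring
  have hg := log_Dconst_est ℓ τ hτ₁ N hN4 hNl
  rw [← hlogA] at hg
  set g : ℝ := Real.log (Dconst N ℓ τ) - Real.log A with hgdef
  have hgle1 : |g| ≤ 1 := hg.trans (by rw [div_le_one hN0]; exact hcN)
  have hexp : |Real.exp g - 1| ≤ 2 * |g| := Real.abs_exp_sub_one_le hgle1
  have hDA : Dconst N ℓ τ = A * Real.exp g := by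
    rw [hgdef, Real.exp_sub, Real.exp_log hDpos, Real.exp_log hApos]
    field_simp
  calc |Dconst N ℓ τ - A| = A * |Real.exp g - 1| := by
        rw [hDA, show A * Real.exp g - A = A * (Real.exp g - 1) from by ring,
          abs_mul, abs_of_pos hApos]
    _ ≤ A * (2*(c₁/(N:ℝ))) := by
        refine mul_le_mul_of_nonneg_left ?_ hApos.le
        calc |Real.exp g - 1| ≤ 2*|g| := hexp
          _ ≤ 2*(c₁/(N:ℝ)) := by linarith [hg]
    _ = (2*c₁/(N:ℝ)) * A := by ring
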